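/- arXiv:0906.1883 — 2 statements merged into one kernel-verified Lean document; each statement's English description precedes it below -/
import Mathlib

section
/- Let (S,Σ) be a measurable space, μ a probability measure on (S,Σ), and X a Banach space. The set V_γ(μ;X) of all countably additive vector measures F: Σ → X of bounded γ-variation with respect to μ is a vector space under setwise operations, ‖·‖_{V_γ(μ;X)} is a norm on it, and V_γ(μ;X) is complete with respect to this norm, i.e. it is a Banach space. -/
open MeasureTheory ProbabilityTheory Function
open scoped ENNReal NNReal

noncomputable section

/-- `γ` is a sequence of independent standard Gaussian random variables on `(Ω, P)`. -/
def IsStdGaussianSeq {Ω : Type*} [MeasurableSpace Ω] (P : Measure Ω) (γ : ℕ → Ω → ℝ) : Prop :=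
  (∀ n, Measurable (γ n)) ∧ ProbabilityTheory.iIndepFun γ P ∧
    ∀ n, Measure.map (γ n) P = ProbabilityTheory.gaussianReal 0 1

/-- The set of quantities `(𝔼 ‖∑ γ_n F(A_n)/√(μ(A_n))‖²)^{1/2}`, taken over all finite
collections of disjoint measurable sets of positive measure; its supremum is the
`γ`-variation of `F` with respect to `μ`. -/
def gammaVarSet {S : Type*} [MeasurableSpace S] {X : Type*} [NormedAddCommGroup X]
    [NormedSpace ℝ X] {Ω : Type*} [MeasurableSpace Ω] (P : Measure Ω) (γ : ℕ → Ω → ℝ)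
    (μ : Measure S) (F : Set S → X) : Set ℝ :=
  { v | ∃ (N : ℕ) (A : Fin N → Set S), (∀ n, MeasurableSet (A n)) ∧
      Pairwise (Disjoint on A) ∧ (∀ n, 0 < μ (A n)) ∧
      v = Real.sqrt (∫ ω, ‖∑ n : Fin N,
            (γ n ω / Real.sqrt ((μ (A n)).toReal)) • F (A n)‖ ^ 2 ∂P) }

/-- `F` has bounded `γ`-variation with respect to `μ`. -/
def HasBoundedGammaVariation {S : Type*} [MeasurableSpace S] {X : Type*} [NormedAddCommGroup X]
    [NormedSpace ℝ X] {Ω : Type*} [MeasurableSpace Ω] (P : Measure Ω) (γ : ℕ → Ω → ℝ)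
    (μ : Measure S) (F : Set S → X) : Prop :=
  BddAbove (gammaVarSet P γ μ F)

/-- The `γ`-variation norm `‖F‖_{V_γ(μ;X)}`. -/
def gammaVar {S : Type*} [MeasurableSpace S] {X : Type*} [NormedAddCommGroup X]
    [NormedSpace ℝ X] {Ω : Type*} [MeasurableSpace Ω] (P : Measure Ω) (γ : ℕ → Ω → ℝ)
    (μ : Measure S) (F : Set S → X) : ℝ :=
  sSup (gammaVarSet P γ μ F)

end

/-!
The `γ`-variation is the supremum, over finite families `A` of disjoint sets of positive measure,
of the seminorms `F ↦ ‖∑ₙ γₙ F(Aₙ)/√μ(Aₙ)‖_{L²(P)}`; this gives the vector space and seminorm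
properties. The family consisting of one set `A` gives `‖F A‖ ≤ √μ(A) ‖F‖_{V_γ}`, so a Cauchy
sequence in `V_γ` converges uniformly on sets. A uniform limit of vector measures is countably
additive, and since each seminorm depends on finitely many values of `F` only, the Cauchy bounds
pass to the limit.
-/

open Filter Topology
open scoped Pointwise

section L2

variable {Ω E : Type*} [MeasurableSpace Ω] {P : Measure Ω} [NormedAddCommGroup E]

theorem MeasureTheory.MemLp.sqrt_integral_norm_sq {f : Ω → E} (hf : MemLp f 2 P) :
    √(∫ ω, ‖f ω‖ ^ 2 ∂P) = (eLpNorm f 2 P).toReal := by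
  rw [hf.eLpNorm_eq_integral_rpow_norm two_ne_zero ENNReal.ofNat_ne_top,
    ENNReal.toReal_ofReal (by positivity), Real.sqrt_eq_rpow]
  norm_num

theorem sqrt_integral_norm_sq_add_le {f g : Ω → E} (hf : MemLp f 2 P) (hg : MemLp g 2 P) :
    √(∫ ω, ‖f ω + g ω‖ ^ 2 ∂P) ≤ √(∫ ω, ‖f ω‖ ^ 2 ∂P) + √(∫ ω, ‖g ω‖ ^ 2 ∂P) := by
  have hfg := (hf.add hg).sqrt_integral_norm_sq
  simp only [Pi.add_apply] at hfg
  rw [hfg, hf.sqrt_integral_norm_sq, hg.sqrt_integral_norm_sq]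
  exact ENNReal.toReal_le_add (eLpNorm_add_le hf.1 hg.1 one_le_two) hf.2.ne hg.2.ne

theorem sqrt_integral_norm_sq_sum_le {ι : Type*} (s : Finset ι) {f : ι → Ω → E}
    (hf : ∀ i ∈ s, MemLp (f i) 2 P) :
    √(∫ ω, ‖∑ i ∈ s, f i ω‖ ^ 2 ∂P) ≤ ∑ i ∈ s, √(∫ ω, ‖f i ω‖ ^ 2 ∂P) := by
  classical
  induction s using Finset.induction_on with
  | empty => simp
  | insert i s hi ih =>
    rw [Finset.forall_mem_insert] at hf
    simp only [Finset.sum_insert hi]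
    exact (sqrt_integral_norm_sq_add_le hf.1 (memLp_finsetSum s hf.2)).trans
      (add_le_add_right (ih hf.2) _)

variable [NormedSpace ℝ E]

theorem sqrt_integral_norm_smul_sq (c : Ω → ℝ) (x : E) :
    √(∫ ω, ‖c ω • x‖ ^ 2 ∂P) = √(∫ ω, c ω ^ 2 ∂P) * ‖x‖ := by
  simp only [norm_smul, mul_pow, Real.norm_eq_abs, sq_abs]
  rw [integral_mul_const, Real.sqrt_mul' _ (sq_nonneg _), Real.sqrt_sq (norm_nonneg x)]

theorem sqrt_integral_norm_div_smul_sq {g : Ω → ℝ} (hg : ∫ ω, g ω ^ 2 ∂P = 1) (a : ℝ) (x : E) :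
    √(∫ ω, ‖(g ω / a) • x‖ ^ 2 ∂P) = ‖x‖ / |a| := by
  simp only [div_eq_mul_inv, mul_smul]
  rw [sqrt_integral_norm_smul_sq, hg, Real.sqrt_one, one_mul, norm_smul, norm_inv,
    Real.norm_eq_abs]
  ring

theorem MeasureTheory.MemLp.smul_const {c : Ω → ℝ} (hc : MemLp c 2 P) (x : E) :
    MemLp (fun ω => c ω • x) 2 P :=
  (memLp_top_const x).smul hc

end L2

namespace IsStdGaussianSeq

variable {Ω : Type*} [MeasurableSpace Ω] {P : Measure Ω} {γ : ℕ → Ω → ℝ}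

theorem memLp_two (hγ : IsStdGaussianSeq P γ) (n : ℕ) : MemLp (γ n) 2 P := by
  have h := memLp_id_gaussianReal' (μ := 0) (v := 1) 2 ENNReal.ofNat_ne_top
  rw [← hγ.2.2 n] at h
  exact (memLp_map_measure_iff aestronglyMeasurable_id (hγ.1 n).aemeasurable).mp h

theorem integral_sq (hγ : IsStdGaussianSeq P γ) (n : ℕ) : ∫ ω, γ n ω ^ 2 ∂P = 1 := by
  have h := variance_fun_id_gaussianReal (μ := 0) (v := 1)
  rw [variance_eq_integral aemeasurable_id', integral_id_gaussianReal, ← hγ.2.2 n,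
    integral_map (hγ.1 n).aemeasurable (by fun_prop)] at h
  simpa using h

end IsStdGaussianSeq

namespace MeasureTheory.VectorMeasure

variable {S M ι : Type*} [MeasurableSpace S] [AddCommMonoid M] [UniformSpace M] [T2Space M]
  [ContinuousAdd M] {l : Filter ι} [l.NeBot]

def ofTendstoUniformly (F : ι → VectorMeasure S M) (g : Set S → M)
    (h : TendstoUniformly (fun i A => F i A) g l) : VectorMeasure S M where
  measureOf' := g
  empty' := tendsto_nhds_unique (h.tendsto_at ∅) (by simp)
  not_measurable' A hA := tendsto_nhds_unique (h.tendsto_at A) (by simp [not_measurable _ hA])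
  m_iUnion' f hf hd := by
    have hfinite : ∀ (G : VectorMeasure S M) (s : Finset ℕ), G (⋃ i ∈ s, f i) = ∑ i ∈ s, G (f i) :=
      fun G s => G.of_biUnion_finset (hd.set_pairwise _) fun i _ => hf i
    have hg (s : Finset ℕ) : g (⋃ i ∈ s, f i) = ∑ i ∈ s, g (f i) := by
      refine tendsto_nhds_unique (h.tendsto_at _) ?_
      simpa only [hfinite] using tendsto_finsetSum s fun i _ => h.tendsto_at (f i)
    show Tendsto (fun s => ∑ i ∈ s, g (f i)) atTop (𝓝 (g (⋃ i, f i)))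
    simp only [← hg]
    refine (h.comp fun s : Finset ℕ => ⋃ i ∈ s, f i).tendsto_of_eventually_tendsto
      (Eventually.of_forall fun i => ?_) (h.tendsto_at _)
    simp only [Function.comp_def, hfinite]
    exact (F i).m_iUnion hf hd

end MeasureTheory.VectorMeasure

section GammaVariation

variable {S : Type*} [MeasurableSpace S] {X : Type*} [NormedAddCommGroup X] [NormedSpace ℝ X]
  {Ω : Type*} [MeasurableSpace Ω] {P : Measure Ω} {γ : ℕ → Ω → ℝ} {μ : Measure S}

noncomputable def gammaSumNorm (P : Measure Ω) (γ : ℕ → Ω → ℝ) (μ : Measure S) (F : Set S → X)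
    {N : ℕ} (A : Fin N → Set S) : ℝ :=
  √(∫ ω, ‖∑ n : Fin N, (γ n ω / √(μ (A n)).toReal) • F (A n)‖ ^ 2 ∂P)

theorem gammaSumNorm_mem_gammaVarSet (F : Set S → X) {N : ℕ} {A : Fin N → Set S}
    (hA : ∀ n, MeasurableSet (A n)) (hd : Pairwise (Disjoint on A)) (hpos : ∀ n, 0 < μ (A n)) :
    gammaSumNorm P γ μ F A ∈ gammaVarSet P γ μ F :=
  ⟨N, A, hA, hd, hpos, rfl⟩

theorem gammaVarSet_nonempty (F : Set S → X) : (gammaVarSet P γ μ F).Nonempty :=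
  ⟨_, 0, finZeroElim, finZeroElim, fun i => i.elim0, finZeroElim, rfl⟩

theorem gammaVar_nonneg (F : Set S → X) : 0 ≤ gammaVar P γ μ F :=
  Real.sSup_nonneg <| by rintro _ ⟨N, A, -, -, -, rfl⟩; exact Real.sqrt_nonneg _

theorem gammaSumNorm_le_gammaVar {F : Set S → X} (hF : HasBoundedGammaVariation P γ μ F) {N : ℕ}
    {A : Fin N → Set S} (hA : ∀ n, MeasurableSet (A n)) (hd : Pairwise (Disjoint on A))
    (hpos : ∀ n, 0 < μ (A n)) : gammaSumNorm P γ μ F A ≤ gammaVar P γ μ F :=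
  le_csSup hF (gammaSumNorm_mem_gammaVarSet F hA hd hpos)

theorem memLp_sum_div_smul (hγ : ∀ n, MemLp (γ n) 2 P) {N : ℕ} (c : Fin N → ℝ) (x : Fin N → X) :
    MemLp (fun ω => ∑ n : Fin N, (γ n ω / c n) • x n) 2 P :=
  memLp_finsetSum _ fun n _ => by
    simpa only [div_eq_mul_inv, mul_smul] using (hγ n).smul_const ((c n)⁻¹ • x n)

theorem gammaSumNorm_add_le (hγ : ∀ n, MemLp (γ n) 2 P) (F G : Set S → X) {N : ℕ}
    (A : Fin N → Set S) :
    gammaSumNorm P γ μ (F + G) A ≤ gammaSumNorm P γ μ F A + gammaSumNorm P γ μ G A := by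
  simp only [gammaSumNorm, Pi.add_apply, smul_add, Finset.sum_add_distrib]
  exact sqrt_integral_norm_sq_add_le (memLp_sum_div_smul hγ _ _) (memLp_sum_div_smul hγ _ _)

theorem gammaSumNorm_smul (c : ℝ) (F : Set S → X) {N : ℕ} (A : Fin N → Set S) :
    gammaSumNorm P γ μ (c • F) A = |c| * gammaSumNorm P γ μ F A := by
  simp only [gammaSumNorm, Pi.smul_apply, smul_comm _ c, ← Finset.smul_sum, norm_smul,
    Real.norm_eq_abs, mul_pow, integral_const_mul]
  rw [Real.sqrt_mul (sq_nonneg _), Real.sqrt_sq (abs_nonneg c)]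

theorem gammaSumNorm_le_sum (hγ : ∀ n, MemLp (γ n) 2 P) (hγ₂ : ∀ n, ∫ ω, γ n ω ^ 2 ∂P = 1)
    (F : Set S → X) {N : ℕ} (A : Fin N → Set S) :
    gammaSumNorm P γ μ F A ≤ ∑ n : Fin N, ‖F (A n)‖ / √(μ (A n)).toReal := by
  refine (sqrt_integral_norm_sq_sum_le _ fun n _ => ?_).trans_eq
    (Finset.sum_congr rfl fun n _ => ?_)
  · simpa only [div_eq_mul_inv, mul_smul] using (hγ n).smul_const ((√(μ (A n)).toReal)⁻¹ • F (A n))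
  · rw [sqrt_integral_norm_div_smul_sq (hγ₂ n), abs_of_nonneg (Real.sqrt_nonneg _)]

theorem gammaSumNorm_singleton (hγ₂ : ∫ ω, γ 0 ω ^ 2 ∂P = 1) (F : Set S → X) (A : Set S) :
    gammaSumNorm P γ μ F (fun _ : Fin 1 => A) = ‖F A‖ / √(μ A).toReal := by
  simp only [gammaSumNorm, Finset.univ_unique, Fin.default_eq_zero, Fin.val_zero,
    Finset.sum_singleton]
  rw [sqrt_integral_norm_div_smul_sq hγ₂, abs_of_nonneg (Real.sqrt_nonneg _)]

theorem gammaVarSet_smul (c : ℝ) (F : Set S → X) :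
    gammaVarSet P γ μ (c • F) = |c| • gammaVarSet P γ μ F := by
  ext v
  constructor
  · rintro ⟨N, A, hA, hd, hpos, rfl⟩
    exact ⟨_, gammaSumNorm_mem_gammaVarSet F hA hd hpos, (gammaSumNorm_smul c F A).symm⟩
  · rintro ⟨_, ⟨N, A, hA, hd, hpos, rfl⟩, rfl⟩
    exact ⟨N, A, hA, hd, hpos, (gammaSumNorm_smul c F A).symm⟩

theorem gammaVarSet_zero : gammaVarSet P γ μ (0 : Set S → X) = {0} := by
  rw [← zero_smul ℝ (0 : Set S → X), gammaVarSet_smul, abs_zero,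
    Set.zero_smul_set (gammaVarSet_nonempty _)]
  rfl

theorem hasBoundedGammaVariation_zero : HasBoundedGammaVariation P γ μ (0 : Set S → X) := by
  rw [HasBoundedGammaVariation, gammaVarSet_zero]
  exact bddAbove_singleton

theorem gammaVar_zero : gammaVar P γ μ (0 : Set S → X) = 0 := by
  rw [gammaVar, gammaVarSet_zero, csSup_singleton]

theorem HasBoundedGammaVariation.smul {F : Set S → X} (hF : HasBoundedGammaVariation P γ μ F)
    (c : ℝ) : HasBoundedGammaVariation P γ μ (c • F) := by
  rw [HasBoundedGammaVariation, gammaVarSet_smul]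
  exact hF.smul_of_nonneg (abs_nonneg c)

theorem gammaVar_smul (c : ℝ) (F : Set S → X) :
    gammaVar P γ μ (c • F) = |c| * gammaVar P γ μ F := by
  rw [gammaVar, gammaVarSet_smul, Real.sSup_smul_of_nonneg (abs_nonneg c), smul_eq_mul, gammaVar]

theorem add_gammaVar_mem_upperBounds (hγ : ∀ n, MemLp (γ n) 2 P) {F G : Set S → X}
    (hF : HasBoundedGammaVariation P γ μ F) (hG : HasBoundedGammaVariation P γ μ G) :
    gammaVar P γ μ F + gammaVar P γ μ G ∈ upperBounds (gammaVarSet P γ μ (F + G)) := by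
  rintro _ ⟨N, A, hA, hd, hpos, rfl⟩
  exact (gammaSumNorm_add_le hγ F G A).trans (add_le_add (gammaSumNorm_le_gammaVar hF hA hd hpos)
    (gammaSumNorm_le_gammaVar hG hA hd hpos))

theorem HasBoundedGammaVariation.add (hγ : ∀ n, MemLp (γ n) 2 P) {F G : Set S → X}
    (hF : HasBoundedGammaVariation P γ μ F) (hG : HasBoundedGammaVariation P γ μ G) :
    HasBoundedGammaVariation P γ μ (F + G) :=
  ⟨_, add_gammaVar_mem_upperBounds hγ hF hG⟩

theorem gammaVar_add_le (hγ : ∀ n, MemLp (γ n) 2 P) {F G : Set S → X}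
    (hF : HasBoundedGammaVariation P γ μ F) (hG : HasBoundedGammaVariation P γ μ G) :
    gammaVar P γ μ (F + G) ≤ gammaVar P γ μ F + gammaVar P γ μ G :=
  Real.sSup_le (add_gammaVar_mem_upperBounds hγ hF hG)
    (add_nonneg (gammaVar_nonneg F) (gammaVar_nonneg G))

theorem HasBoundedGammaVariation.sub (hγ : ∀ n, MemLp (γ n) 2 P) {F G : Set S → X}
    (hF : HasBoundedGammaVariation P γ μ F) (hG : HasBoundedGammaVariation P γ μ G) :
    HasBoundedGammaVariation P γ μ (F - G) := by
  simpa only [sub_eq_add_neg, neg_one_smul] using hF.add hγ (hG.smul (-1))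

theorem norm_le_gammaVar [IsFiniteMeasure μ] (hγ₂ : ∫ ω, γ 0 ω ^ 2 ∂P = 1) {F : Set S → X}
    (hF : HasBoundedGammaVariation P γ μ F) {A : Set S} (hA : MeasurableSet A) (hpos : 0 < μ A) :
    ‖F A‖ ≤ √(μ A).toReal * gammaVar P γ μ F := by
  have hsingle := gammaSumNorm_le_gammaVar (A := fun _ : Fin 1 => A) hF (fun _ => hA)
    Subsingleton.pairwise fun _ => hpos
  rwa [gammaSumNorm_singleton hγ₂, div_le_iff₀' (Real.sqrt_pos.2 (ENNReal.toReal_pos hpos.ne'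
    (measure_ne_top μ A)))] at hsingle

theorem MeasureTheory.VectorMeasure.norm_apply_le_gammaVar [IsFiniteMeasure μ] [NeZero μ]
    (hγ₂ : ∫ ω, γ 0 ω ^ 2 ∂P = 1) {V : VectorMeasure S X}
    (hV : HasBoundedGammaVariation P γ μ V) (A : Set S) :
    ‖V A‖ ≤ 2 * √(μ Set.univ).toReal * gammaVar P γ μ V := by
  have hbound : ∀ B, MeasurableSet B → 0 < μ B → ‖V B‖ ≤ √(μ Set.univ).toReal * gammaVar P γ μ V :=
    fun B hB hpos => (norm_le_gammaVar hγ₂ hV hB hpos).trans <| mul_le_mul_of_nonneg_right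
      (Real.sqrt_le_sqrt (ENNReal.toReal_mono (measure_ne_top μ _)
        (measure_mono (Set.subset_univ B))))
      (gammaVar_nonneg _)
  have hnonneg : 0 ≤ √(μ Set.univ).toReal * gammaVar P γ μ V :=
    mul_nonneg (Real.sqrt_nonneg _) (gammaVar_nonneg _)
  by_cases hA : MeasurableSet A
  swap
  · rw [V.not_measurable hA, norm_zero]
    linarith
  rcases eq_or_ne (μ A) 0 with h0 | h0
  · -- a null set is controlled through its complement, which has full measure
    have hAc : 0 < μ Aᶜ := by
      rw [measure_compl hA (measure_ne_top μ A), h0, tsub_zero]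
      exact NeZero.pos _
    have hsplit : V A = V Set.univ - V Aᶜ := by
      rw [← Set.union_compl_self A, V.of_union disjoint_compl_right hA hA.compl,
        add_sub_cancel_right]
    rw [hsplit]
    linarith [norm_sub_le (V Set.univ) (V Aᶜ), hbound _ MeasurableSet.univ
      (NeZero.pos _), hbound _ hA.compl hAc]
  · linarith [hbound A hA (pos_iff_ne_zero.2 h0)]

theorem MeasureTheory.VectorMeasure.eq_zero_of_gammaVar_eq_zero [IsFiniteMeasure μ] [NeZero μ]
    (hγ₂ : ∫ ω, γ 0 ω ^ 2 ∂P = 1) {V : VectorMeasure S X}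
    (hV : HasBoundedGammaVariation P γ μ V) (h0 : gammaVar P γ μ V = 0) : V = 0 :=
  VectorMeasure.ext fun A _ => norm_le_zero_iff.1 <| by
    simpa [h0] using V.norm_apply_le_gammaVar hγ₂ hV A

theorem tendsto_gammaSumNorm (hγ : ∀ n, MemLp (γ n) 2 P) (hγ₂ : ∀ n, ∫ ω, γ n ω ^ 2 ∂P = 1)
    {ι : Type*} {l : Filter ι} {H : ι → Set S → X} {F : Set S → X}
    (hH : ∀ A, Tendsto (fun i => H i A) l (𝓝 (F A))) {N : ℕ} (A : Fin N → Set S) :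
    Tendsto (fun i => gammaSumNorm P γ μ (H i) A) l (𝓝 (gammaSumNorm P γ μ F A)) := by
  have hlip : ∀ G : Set S → X, dist (gammaSumNorm P γ μ G A) (gammaSumNorm P γ μ F A) ≤
      ∑ n : Fin N, ‖G (A n) - F (A n)‖ / √(μ (A n)).toReal := by
    intro G
    have hGF := gammaSumNorm_le_sum (μ := μ) hγ hγ₂ (G - F) A
    have hFG := gammaSumNorm_le_sum (μ := μ) hγ hγ₂ (F - G) A
    simp only [Pi.sub_apply, norm_sub_rev (F _)] at hGF hFG
    rw [Real.dist_eq, abs_sub_le_iff]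
    constructor
    · have h := gammaSumNorm_add_le (μ := μ) hγ (G - F) F A
      rw [sub_add_cancel] at h
      linarith
    · have h := gammaSumNorm_add_le (μ := μ) hγ (F - G) G A
      rw [sub_add_cancel] at h
      linarith
  refine tendsto_iff_dist_tendsto_zero.2
    (squeeze_zero (fun _ => dist_nonneg) (fun i => hlip (H i)) ?_)
  simpa using tendsto_finsetSum Finset.univ fun n _ =>
    ((hH (A n)).sub_const (F (A n))).norm.div_const √(μ (A n)).toReal

theorem mem_upperBounds_gammaVarSet_of_tendsto (hγ : ∀ n, MemLp (γ n) 2 P)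
    (hγ₂ : ∀ n, ∫ ω, γ n ω ^ 2 ∂P = 1) {ι : Type*} {l : Filter ι} [l.NeBot] {H : ι → Set S → X}
    {F : Set S → X} (hH : ∀ A, Tendsto (fun i => H i A) l (𝓝 (F A))) {C : ℝ}
    (hC : ∀ᶠ i in l, HasBoundedGammaVariation P γ μ (H i) ∧ gammaVar P γ μ (H i) ≤ C) :
    C ∈ upperBounds (gammaVarSet P γ μ F) := by
  rintro _ ⟨N, A, hA, hd, hpos, rfl⟩
  exact le_of_tendsto (tendsto_gammaSumNorm hγ hγ₂ hH A)
    (hC.mono fun i hi => (gammaSumNorm_le_gammaVar hi.1 hA hd hpos).trans hi.2)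

theorem exists_tendsto_gammaVar_of_cauchy [CompleteSpace X] [IsFiniteMeasure μ] [NeZero μ]
    (hγ : ∀ n, MemLp (γ n) 2 P) (hγ₂ : ∀ n, ∫ ω, γ n ω ^ 2 ∂P = 1) (F : ℕ → VectorMeasure S X)
    (hF : ∀ n, HasBoundedGammaVariation P γ μ (F n))
    (hcauchy : ∀ ε > 0, ∃ N, ∀ m ≥ N, ∀ n ≥ N, gammaVar P γ μ ⇑(F m - F n) < ε) :
    ∃ G : VectorMeasure S X, HasBoundedGammaVariation P γ μ G ∧
      ∀ ε > 0, ∃ N, ∀ n ≥ N, gammaVar P γ μ ⇑(F n - G) < ε := by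
  set K := 2 * √(μ Set.univ).toReal
  have hK : 0 < K := mul_pos two_pos <| Real.sqrt_pos.2 <|
    ENNReal.toReal_pos (NeZero.ne _) (measure_ne_top μ _)
  have hunif : UniformCauchySeqOn (fun n A => F n A) atTop Set.univ := by
    refine Metric.uniformCauchySeqOn_iff.2 fun ε hε => ?_
    obtain ⟨N, hN⟩ := hcauchy (ε / K) (div_pos hε hK)
    refine ⟨N, fun m hm n hn A _ => ?_⟩
    rw [dist_eq_norm, ← sub_apply]
    calc _ ≤ K * gammaVar P γ μ ⇑(F m - F n) :=
          (F m - F n).norm_apply_le_gammaVar (hγ₂ 0) ((hF m).sub hγ (hF n)) A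
      _ < K * (ε / K) := mul_lt_mul_of_pos_left (hN m hm n hn) hK
      _ = ε := mul_div_cancel₀ _ hK.ne'
  choose g hg using fun A => cauchySeq_tendsto_of_complete (hunif.cauchySeq (Set.mem_univ A))
  let G := VectorMeasure.ofTendstoUniformly F g <|
    tendstoUniformlyOn_univ.1 (hunif.tendstoUniformlyOn_of_tendsto fun A _ => hg A)
  have hclose : ∀ ε > 0, ∃ N, ∀ n ≥ N,
      HasBoundedGammaVariation P γ μ ⇑(F n - G) ∧ gammaVar P γ μ ⇑(F n - G) ≤ ε := by
    intro ε hε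
    obtain ⟨N, hN⟩ := hcauchy ε hε
    refine ⟨N, fun n hn => ?_⟩
    have hub : ε ∈ upperBounds (gammaVarSet P γ μ ⇑(F n - G)) :=
      mem_upperBounds_gammaVarSet_of_tendsto hγ hγ₂ (H := fun m => ⇑(F n - F m))
        (fun A => tendsto_const_nhds.sub (hg A))
        (eventually_atTop.2 ⟨N, fun m hm => ⟨(hF n).sub hγ (hF m), (hN n hn m hm).le⟩⟩)
    exact ⟨⟨ε, hub⟩, csSup_le (gammaVarSet_nonempty _) hub⟩
  refine ⟨G, ?_, fun ε hε => ?_⟩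
  · obtain ⟨N, hN⟩ := hclose 1 one_pos
    have h := (hF N).sub hγ (hN N le_rfl).1
    rwa [← FunLike.coe_sub, sub_sub_cancel] at h
  · obtain ⟨N, hN⟩ := hclose (ε / 2) (half_pos hε)
    exact ⟨N, fun n hn => (hN n hn).2.trans_lt (half_lt_self hε)⟩

end GammaVariation

theorem gammaVariation_banachSpace_general
    {S : Type*} [MeasurableSpace S] {X : Type*} [NormedAddCommGroup X] [NormedSpace ℝ X]
    [CompleteSpace X]
    {Ω : Type*} [MeasurableSpace Ω] (P : Measure Ω)
    (γ : ℕ → Ω → ℝ) (hγ : IsStdGaussianSeq P γ)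
    (μ : Measure S) [IsProbabilityMeasure μ] :
    -- `V_γ(μ;X)` is closed under the vector space operations (setwise operations):
    ((0 : VectorMeasure S X) ∈ {F : VectorMeasure S X | HasBoundedGammaVariation P γ μ ⇑F}) ∧
    (∀ F G : VectorMeasure S X, HasBoundedGammaVariation P γ μ ⇑F →
      HasBoundedGammaVariation P γ μ ⇑G → HasBoundedGammaVariation P γ μ ⇑(F + G)) ∧
    (∀ (c : ℝ) (F : VectorMeasure S X), HasBoundedGammaVariation P γ μ ⇑F →
      HasBoundedGammaVariation P γ μ ⇑(c • F)) ∧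
    -- `‖·‖_{V_γ(μ;X)}` is a norm on `V_γ(μ;X)`:
    (gammaVar P γ μ ⇑(0 : VectorMeasure S X) = 0) ∧
    (∀ F : VectorMeasure S X, HasBoundedGammaVariation P γ μ ⇑F →
      gammaVar P γ μ ⇑F = 0 → F = 0) ∧
    (∀ F : VectorMeasure S X, HasBoundedGammaVariation P γ μ ⇑F →
      0 ≤ gammaVar P γ μ ⇑F) ∧
    (∀ (c : ℝ) (F : VectorMeasure S X), HasBoundedGammaVariation P γ μ ⇑F →
      gammaVar P γ μ ⇑(c • F) = |c| * gammaVar P γ μ ⇑F) ∧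
    (∀ F G : VectorMeasure S X, HasBoundedGammaVariation P γ μ ⇑F →
      HasBoundedGammaVariation P γ μ ⇑G →
      gammaVar P γ μ ⇑(F + G) ≤ gammaVar P γ μ ⇑F + gammaVar P γ μ ⇑G) ∧
    -- completeness: every Cauchy sequence in the `γ`-variation norm converges:
    (∀ F : ℕ → VectorMeasure S X, (∀ n, HasBoundedGammaVariation P γ μ ⇑(F n)) →
      (∀ ε : ℝ, 0 < ε → ∃ N : ℕ, ∀ m ≥ N, ∀ n ≥ N, gammaVar P γ μ ⇑(F m - F n) < ε) →
      ∃ G : VectorMeasure S X, HasBoundedGammaVariation P γ μ ⇑G ∧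
        ∀ ε : ℝ, 0 < ε → ∃ N : ℕ, ∀ n ≥ N, gammaVar P γ μ ⇑(F n - G) < ε) := by
  have hL2 := hγ.memLp_two
  have hsq := hγ.integral_sq
  exact ⟨hasBoundedGammaVariation_zero,
    fun F G hF hG => hF.add hL2 hG,
    fun c F hF => hF.smul c,
    gammaVar_zero,
    fun F hF h0 => VectorMeasure.eq_zero_of_gammaVar_eq_zero (hsq 0) hF h0,
    fun F _ => gammaVar_nonneg _,
    fun c F _ => gammaVar_smul c F,
    fun F G hF hG => gammaVar_add_le hL2 hF hG,
    fun F hF hcauchy => exists_tendsto_gammaVar_of_cauchy hL2 hsq F hF hcauchy⟩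

/-- The space `V_γ(μ;X)` of countably additive vector measures of bounded
`γ`-variation with respect to `μ` is a vector space under setwise operations, the
`γ`-variation is a norm on it, and it is complete with respect to this norm, i.e. it is a
Banach space. -/
theorem gammaVariation_banachSpace
    {S : Type*} [MeasurableSpace S] {X : Type*} [NormedAddCommGroup X] [NormedSpace ℝ X]
    [CompleteSpace X]
    {Ω : Type*} [MeasurableSpace Ω] (P : Measure Ω) [IsProbabilityMeasure P]
    (γ : ℕ → Ω → ℝ) (hγ : IsStdGaussianSeq P γ)
    (μ : Measure S) [IsProbabilityMeasure μ] :
    -- `V_γ(μ;X)` is closed under the vector space operations (setwise operations):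
    ((0 : VectorMeasure S X) ∈ {F : VectorMeasure S X | HasBoundedGammaVariation P γ μ ⇑F}) ∧
    (∀ F G : VectorMeasure S X, HasBoundedGammaVariation P γ μ ⇑F →
      HasBoundedGammaVariation P γ μ ⇑G → HasBoundedGammaVariation P γ μ ⇑(F + G)) ∧
    (∀ (c : ℝ) (F : VectorMeasure S X), HasBoundedGammaVariation P γ μ ⇑F →
      HasBoundedGammaVariation P γ μ ⇑(c • F)) ∧
    -- `‖·‖_{V_γ(μ;X)}` is a norm on `V_γ(μ;X)`:
    (gammaVar P γ μ ⇑(0 : VectorMeasure S X) = 0) ∧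
    (∀ F : VectorMeasure S X, HasBoundedGammaVariation P γ μ ⇑F →
      gammaVar P γ μ ⇑F = 0 → F = 0) ∧
    (∀ F : VectorMeasure S X, HasBoundedGammaVariation P γ μ ⇑F →
      0 ≤ gammaVar P γ μ ⇑F) ∧
    (∀ (c : ℝ) (F : VectorMeasure S X), HasBoundedGammaVariation P γ μ ⇑F →
      gammaVar P γ μ ⇑(c • F) = |c| * gammaVar P γ μ ⇑F) ∧
    (∀ F G : VectorMeasure S X, HasBoundedGammaVariation P γ μ ⇑F →
      HasBoundedGammaVariation P γ μ ⇑G →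
      gammaVar P γ μ ⇑(F + G) ≤ gammaVar P γ μ ⇑F + gammaVar P γ μ ⇑G) ∧
    -- completeness: every Cauchy sequence in the `γ`-variation norm converges:
    (∀ F : ℕ → VectorMeasure S X, (∀ n, HasBoundedGammaVariation P γ μ ⇑(F n)) →
      (∀ ε : ℝ, 0 < ε → ∃ N : ℕ, ∀ m ≥ N, ∀ n ≥ N, gammaVar P γ μ ⇑(F m - F n) < ε) →
      ∃ G : VectorMeasure S X, HasBoundedGammaVariation P γ μ ⇑G ∧
        ∀ ε : ℝ, 0 < ε → ∃ N : ℕ, ∀ n ≥ N, gammaVar P γ μ ⇑(F n - G) < ε) :=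
  gammaVariation_banachSpace_general P γ hγ μ
end

section
/- Let (S,Σ) be a measurable space, μ a probability measure on (S,Σ), and X a Banach space of type 2 with type-2 constant C. Then for every Bochner square-integrable function φ ∈ L²(μ;X), the formula F(A) := ∫_A φ dμ (Bochner integral), A ∈ Σ, defines a countably additive vector measure F: Σ → X of bounded γ-variation with respect to μ, and ‖F‖_{V_γ(μ;X)} ≤ C ‖φ‖_{L²(μ;X)}. -/
open MeasureTheory ProbabilityTheory Function
open scoped ENNReal NNReal

noncomputable section

/-- `r` is a Rademacher sequence on `(Ω, P)`: independent random variables taking the values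
`1` and `-1` each with probability `1/2`. -/
def IsRademacherSeq {Ω : Type*} [MeasurableSpace Ω] (P : Measure Ω) (r : ℕ → Ω → ℝ) : Prop :=
  (∀ n, Measurable (r n)) ∧ ProbabilityTheory.iIndepFun r P ∧
    ∀ n, Measure.map (r n) P =
      (1 / 2 : ENNReal) • Measure.dirac (1 : ℝ) + (1 / 2 : ENNReal) • Measure.dirac (-1 : ℝ)

/-- The set of quantities `(𝔼 ‖∑ r_n F(A_n)‖²)^{1/2}`, taken over all finite collections of
disjoint measurable sets; its supremum is the randomised variation of `F`. -/
def randVarSet {S : Type*} [MeasurableSpace S] {X : Type*} [NormedAddCommGroup X]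
    [NormedSpace ℝ X] {Ω : Type*} [MeasurableSpace Ω] (P : Measure Ω) (r : ℕ → Ω → ℝ)
    (F : Set S → X) : Set ℝ :=
  { v | ∃ (N : ℕ) (A : Fin N → Set S), (∀ n, MeasurableSet (A n)) ∧
      Pairwise (Disjoint on A) ∧
      v = Real.sqrt (∫ ω, ‖∑ n : Fin N, r n ω • F (A n)‖ ^ 2 ∂P) }

/-- `F` is of bounded randomised variation. -/
def HasBoundedRandVariation {S : Type*} [MeasurableSpace S] {X : Type*} [NormedAddCommGroup X]
    [NormedSpace ℝ X] {Ω : Type*} [MeasurableSpace Ω] (P : Measure Ω) (r : ℕ → Ω → ℝ)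
    (F : Set S → X) : Prop :=
  BddAbove (randVarSet P r F)

/-- The randomised variation norm `‖F‖_{V^r}`. -/
def randVar {S : Type*} [MeasurableSpace S] {X : Type*} [NormedAddCommGroup X]
    [NormedSpace ℝ X] {Ω : Type*} [MeasurableSpace Ω] (P : Measure Ω) (r : ℕ → Ω → ℝ)
    (F : Set S → X) : ℝ :=
  sSup (randVarSet P r F)

end

/-!
Flipping the signs of an independent symmetric sequence does not change its joint law, so by
Fubini `𝔼‖∑ γₙ xₙ‖² = 𝔼_γ 𝔼_r ‖∑ rₙ (γₙ xₙ)‖² ≤ C² 𝔼 ∑ γₙ² ‖xₙ‖² = C² ∑ ‖xₙ‖²`: Gaussian sums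
satisfy the type 2 inequality with the same constant. For `xₙ = F(Aₙ)/√μ(Aₙ) = √μ(Aₙ) ⨍_{Aₙ} φ`,
Jensen's inequality gives `‖xₙ‖² ≤ ∫_{Aₙ} ‖φ‖²`, and summing over the disjoint `Aₙ` bounds
`∑ ‖xₙ‖²` by `‖φ‖²_{L²}`.
-/

def HasType2 (X : Type*) [NormedAddCommGroup X] [NormedSpace ℝ X] {Ω' : Type*}
    [MeasurableSpace Ω'] (P' : Measure Ω') (r : ℕ → Ω' → ℝ) (C : ℝ) : Prop :=
  ∀ (N : ℕ) (x : Fin N → X),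
    √(∫ ω', ‖∑ n : Fin N, r n ω' • x n‖ ^ 2 ∂P') ≤ C * √(∑ n : Fin N, ‖x n‖ ^ 2)

section

variable {Ω : Type*} [MeasurableSpace Ω] {P : Measure Ω}
  {Ω' : Type*} [MeasurableSpace Ω'] {P' : Measure Ω'}
  {X : Type*} [NormedAddCommGroup X] [NormedSpace ℝ X]
  {S : Type*} [MeasurableSpace S] {μ : Measure S}
  {ι : Type*} [Fintype ι]

theorem IsStdGaussianSeq.memLp_two_s8 {γ : ℕ → Ω → ℝ} (hγ : IsStdGaussianSeq P γ) (n : ℕ) :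
    MemLp (γ n) 2 P := by
  have h : MemLp id 2 (P.map (γ n)) := by
    rw [hγ.2.2 n]
    exact memLp_id_gaussianReal' 2 ENNReal.ofNat_ne_top
  exact (memLp_map_measure_iff aestronglyMeasurable_id (hγ.1 n).aemeasurable).mp h

theorem IsStdGaussianSeq.integral_sq_s8 {γ : ℕ → Ω → ℝ} (hγ : IsStdGaussianSeq P γ) (n : ℕ) :
    ∫ ω, γ n ω ^ 2 ∂P = 1 := by
  have h := integral_map (μ := P) (f := fun y : ℝ => y ^ 2) (hγ.1 n).aemeasurable
    (by fun_prop)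
  rw [hγ.2.2 n] at h
  rw [← h]
  simpa [variance_of_integral_eq_zero aemeasurable_id integral_id_gaussianReal] using
    variance_id_gaussianReal (μ := 0) (v := 1)

theorem IsStdGaussianSeq.map_neg {γ : ℕ → Ω → ℝ} (hγ : IsStdGaussianSeq P γ) (n : ℕ) :
    P.map (fun ω => -γ n ω) = P.map (γ n) := by
  rw [show (fun ω => -γ n ω) = Neg.neg ∘ γ n from rfl, ← Measure.map_map measurable_neg (hγ.1 n),
    hγ.2.2 n, gaussianReal_map_neg, neg_zero]

theorem IsRademacherSeq.ae_eq_one_or_neg_one {r : ℕ → Ω → ℝ} (hr : IsRademacherSeq P r) :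
    ∀ᵐ ω ∂P, ∀ n, r n ω = 1 ∨ r n ω = -1 := by
  refine ae_all_iff.mpr fun n => ?_
  have hs : MeasurableSet ({1, -1}ᶜ : Set ℝ) := by measurability
  have h : P (r n ⁻¹' {1, -1}ᶜ) = 0 := by
    rw [← Measure.map_apply (hr.1 n) hs, hr.2.2 n]
    simp [Measure.dirac_apply' _ hs]
  filter_upwards [measure_eq_zero_iff_ae_notMem.mp h] with ω hω
  simpa [or_iff_not_imp_left] using hω

theorem map_sign_mul_eq_map {ξ : ι → Ω → ℝ} (hξ : ∀ i, AEMeasurable (ξ i) P)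
    (hind : iIndepFun ξ P) (hsymm : ∀ i, P.map (fun ω => -ξ i ω) = P.map (ξ i)) {ε : ι → ℝ}
    (hε : ∀ i, ε i = 1 ∨ ε i = -1) :
    P.map (fun ω i => ε i * ξ i ω) = P.map (fun ω i => ξ i ω) := by
  have hεξ : iIndepFun (fun i ω => ε i * ξ i ω) P :=
    hind.comp (fun i y => ε i * y) fun i => measurable_const_mul _
  rw [hεξ.map_fun_eq_pi_map fun i => (hξ i).const_mul _, hind.map_fun_eq_pi_map hξ]
  congr with i : 1
  rcases hε i with h | h <;> simp [h, hsymm]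

theorem integrable_norm_sum_smul_sq {g : ι → S → ℝ} (hg : ∀ i, MemLp (g i) 2 μ) (x : ι → X) :
    Integrable (fun s => ‖∑ i, g i s • x i‖ ^ 2) μ := by
  have h : MemLp (fun s => ∑ i, g i s • x i) 2 μ :=
    memLp_finsetSum _ fun i _ => (memLp_top_const (x i)).smul (q := ⊤) (hg i)
  exact h.integrable_norm_pow two_ne_zero

theorem integral_norm_sum_smul_sq_le_of_signs [IsProbabilityMeasure P] [IsProbabilityMeasure P']
    {ξ : ι → Ω → ℝ} (hξ : ∀ i, MemLp (ξ i) 2 P) (hind : iIndepFun ξ P)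
    (hsymm : ∀ i, P.map (fun ω => -ξ i ω) = P.map (ξ i))
    {r : ι → Ω' → ℝ} (hrm : ∀ i, Measurable (r i))
    (hr : ∀ᵐ ω' ∂P', ∀ i, r i ω' = 1 ∨ r i ω' = -1) {C : ℝ}
    (htype : ∀ y : ι → X, ∫ ω', ‖∑ i, r i ω' • y i‖ ^ 2 ∂P' ≤ C ^ 2 * ∑ i, ‖y i‖ ^ 2)
    (x : ι → X) :
    ∫ ω, ‖∑ i, ξ i ω • x i‖ ^ 2 ∂P ≤ C ^ 2 * ∑ i, (∫ ω, ξ i ω ^ 2 ∂P) * ‖x i‖ ^ 2 := by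
  set f : Ω' → Ω → ℝ := fun ω' ω => ‖∑ i, (r i ω' * ξ i ω) • x i‖ ^ 2
  have hG : Continuous fun y : ι → ℝ => ‖∑ i, y i • x i‖ ^ 2 := by fun_prop
  have hξm : ∀ i, AEMeasurable (ξ i) P := fun i => (hξ i).aestronglyMeasurable.aemeasurable
  have hsection : ∀ᵐ ω' ∂P', ∫ ω, f ω' ω ∂P = ∫ ω, ‖∑ i, ξ i ω • x i‖ ^ 2 ∂P := by
    filter_upwards [hr] with ω' hω'
    have hmap := map_sign_mul_eq_map hξm hind hsymm hω'
    rw [← integral_map (aemeasurable_pi_lambda _ fun i => (hξm i).const_mul _)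
      hG.aestronglyMeasurable, hmap, integral_map (aemeasurable_pi_lambda _ hξm)
      hG.aestronglyMeasurable]
  have hr_top : ∀ i, MemLp (r i) ⊤ P' := fun i =>
    memLp_top_of_bound (hrm i).aestronglyMeasurable 1 <| by
      filter_upwards [hr] with ω' hω'
      rcases hω' i with h | h <;> simp [h]
  have hint : Integrable (Function.uncurry f) (P'.prod P) :=
    integrable_norm_sum_smul_sq (fun i =>
      ((hξ i).comp_measurePreserving measurePreserving_snd).mul'
        ((hr_top i).comp_measurePreserving measurePreserving_fst)) x
  have hξsq : ∀ i, Integrable (fun ω => ξ i ω ^ 2) P := fun i => (hξ i).integrable_sq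
  calc ∫ ω, ‖∑ i, ξ i ω • x i‖ ^ 2 ∂P = ∫ ω', ∫ ω, f ω' ω ∂P ∂P' := by
        rw [integral_congr_ae hsection, integral_const, probReal_univ, one_smul]
    _ = ∫ ω, ∫ ω', f ω' ω ∂P' ∂P := integral_integral_swap hint
    _ ≤ ∫ ω, C ^ 2 * ∑ i, ξ i ω ^ 2 * ‖x i‖ ^ 2 ∂P := by
        refine integral_mono hint.integral_prod_right
          ((integrable_finsetSum _ fun i _ => (hξsq i).mul_const _).const_mul _) fun ω => ?_
        simpa [f, mul_smul, norm_smul, mul_pow] using htype fun i => ξ i ω • x i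
    _ = C ^ 2 * ∑ i, (∫ ω, ξ i ω ^ 2 ∂P) * ‖x i‖ ^ 2 := by
        rw [integral_const_mul, integral_finsetSum _ fun i _ => (hξsq i).mul_const _]
        simp_rw [integral_mul_const]

namespace HasType2

variable {r : ℕ → Ω' → ℝ} {C : ℝ}

theorem integral_norm_sum_smul_sq_le (hX : HasType2 X P' r C) (N : ℕ) (x : Fin N → X) :
    ∫ ω', ‖∑ n : Fin N, r n ω' • x n‖ ^ 2 ∂P' ≤ C ^ 2 * ∑ n : Fin N, ‖x n‖ ^ 2 := by
  have h := pow_le_pow_left₀ (Real.sqrt_nonneg _) (hX N x) 2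
  rwa [Real.sq_sqrt (integral_nonneg fun _ => by positivity), mul_pow,
    Real.sq_sqrt (by positivity)] at h

theorem nonneg [Nontrivial X] (hX : HasType2 X P' r C) : 0 ≤ C := by
  obtain ⟨x, hx⟩ := exists_ne (0 : X)
  have h := (Real.sqrt_nonneg _).trans (hX 1 fun _ => x)
  rw [Fin.sum_univ_one, Real.sqrt_sq (norm_nonneg x)] at h
  exact nonneg_of_mul_nonneg_left h (norm_pos_iff.mpr hx)

end HasType2

theorem IsStdGaussianSeq.integral_norm_sum_smul_sq_le [IsProbabilityMeasure P]
    [IsProbabilityMeasure P'] {γ : ℕ → Ω → ℝ}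
    (hγ : IsStdGaussianSeq P γ) {r : ℕ → Ω' → ℝ} (hr : IsRademacherSeq P' r) {C : ℝ}
    (hX : HasType2 X P' r C) (N : ℕ) (x : Fin N → X) :
    ∫ ω, ‖∑ n : Fin N, γ n ω • x n‖ ^ 2 ∂P ≤ C ^ 2 * ∑ n : Fin N, ‖x n‖ ^ 2 := by
  have hsigns : ∀ᵐ ω' ∂P', ∀ n : Fin N, r n ω' = 1 ∨ r n ω' = -1 := by
    filter_upwards [hr.ae_eq_one_or_neg_one] with ω' h n using h n
  simpa [hγ.integral_sq_s8] using integral_norm_sum_smul_sq_le_of_signs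
    (fun n : Fin N => hγ.memLp_two_s8 n) (hγ.2.1.precomp Fin.val_injective)
    (fun n => hγ.map_neg n) (fun n => hr.1 n) hsigns (hX.integral_norm_sum_smul_sq_le N) x

theorem MeasureTheory.Lp.norm_sq_eq_integral_norm_sq {E : Type*} [NormedAddCommGroup E]
    (φ : Lp E 2 μ) : ‖φ‖ ^ 2 = ∫ s, ‖φ s‖ ^ 2 ∂μ := by
  rw [Lp.norm_def, (Lp.memLp φ).eLpNorm_eq_integral_rpow_norm two_ne_zero ENNReal.ofNat_ne_top,
    ENNReal.toReal_ofReal (by positivity)]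
  simp only [ENNReal.toReal_ofNat, Real.rpow_two]
  exact_mod_cast Real.rpow_inv_natCast_pow (n := 2) (integral_nonneg fun _ => by positivity)
    two_ne_zero

theorem norm_inv_sqrt_smul_setIntegral_sq_le [CompleteSpace X] [IsFiniteMeasure μ] {φ : S → X}
    (hφ : MemLp φ 2 μ) (A : Set S) :
    ‖(√(μ A).toReal)⁻¹ • ∫ s in A, φ s ∂μ‖ ^ 2 ≤ ∫ s in A, ‖φ s‖ ^ 2 ∂μ := by
  rcases eq_or_ne (μ A) 0 with h0 | h0
  · simp [h0]
  have hJensen := ((convexOn_norm convex_univ).pow (fun _ _ => norm_nonneg _) 2).map_set_average_le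
    (by fun_prop) isClosed_univ h0 (measure_ne_top _ _) (ae_of_all _ fun _ => trivial)
    (hφ.integrable one_le_two).integrableOn (hφ.integrable_norm_pow two_ne_zero).integrableOn
  simp only [Pi.pow_apply, setAverage_eq, measureReal_def, norm_smul, smul_eq_mul] at hJensen ⊢
  set t := (μ A).toReal
  have ht : 0 < t := ENNReal.toReal_pos h0 (measure_ne_top _ _)
  rw [Real.norm_of_nonneg (inv_nonneg.2 ht.le), mul_pow] at hJensen
  rw [Real.norm_of_nonneg (by positivity), mul_pow, inv_pow, Real.sq_sqrt ht.le]
  calc t⁻¹ * ‖∫ s in A, φ s ∂μ‖ ^ 2 = t * (t⁻¹ ^ 2 * ‖∫ s in A, φ s ∂μ‖ ^ 2) := by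
        field_simp
    _ ≤ t * (t⁻¹ * ∫ s in A, ‖φ s‖ ^ 2 ∂μ) := by gcongr
    _ = ∫ s in A, ‖φ s‖ ^ 2 ∂μ := by field_simp

theorem sum_norm_inv_sqrt_smul_setIntegral_sq_le [CompleteSpace X] [IsFiniteMeasure μ]
    (φ : Lp X 2 μ) {A : ι → Set S} (hA : ∀ i, MeasurableSet (A i))
    (hdisj : Pairwise (Disjoint on A)) :
    ∑ i, ‖(√(μ (A i)).toReal)⁻¹ • ∫ s in A i, φ s ∂μ‖ ^ 2 ≤ ‖φ‖ ^ 2 := by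
  have hφ : Integrable (fun s => ‖φ s‖ ^ 2) μ := (Lp.memLp φ).integrable_norm_pow two_ne_zero
  calc ∑ i, ‖(√(μ (A i)).toReal)⁻¹ • ∫ s in A i, φ s ∂μ‖ ^ 2
      ≤ ∑ i, ∫ s in A i, ‖φ s‖ ^ 2 ∂μ :=
        Finset.sum_le_sum fun i _ => norm_inv_sqrt_smul_setIntegral_sq_le (Lp.memLp φ) (A i)
    _ = ∫ s in ⋃ i, A i, ‖φ s‖ ^ 2 ∂μ :=
        (integral_iUnion_fintype hA hdisj fun i => hφ.integrableOn).symm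
    _ ≤ ∫ s, ‖φ s‖ ^ 2 ∂μ := setIntegral_le_integral hφ (ae_of_all _ fun s => by positivity)
    _ = ‖φ‖ ^ 2 := (Lp.norm_sq_eq_integral_norm_sq φ).symm

theorem zero_mem_gammaVarSet {γ : ℕ → Ω → ℝ} (F : Set S → X) : 0 ∈ gammaVarSet P γ μ F :=
  ⟨0, Fin.elim0, fun i => i.elim0, fun i => i.elim0, fun i => i.elim0, by simp⟩

end

/-- Let `X` have type 2 with type-2 constant `C`. For every
`φ ∈ L²(μ;X)` the formula `F(A) := ∫_A φ dμ` defines a countably additive vector measure of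
bounded `γ`-variation with respect to `μ`, and `‖F‖_{V_γ(μ;X)} ≤ C ‖φ‖_{L²(μ;X)}`. -/
theorem gammaVariation_of_type2
    {S : Type*} [MeasurableSpace S] {X : Type*} [NormedAddCommGroup X] [NormedSpace ℝ X]
    [CompleteSpace X]
    {Ω : Type*} [MeasurableSpace Ω] (P : Measure Ω) [IsProbabilityMeasure P]
    (γ : ℕ → Ω → ℝ) (hγ : IsStdGaussianSeq P γ)
    {Ω' : Type*} [MeasurableSpace Ω'] (P' : Measure Ω') [IsProbabilityMeasure P']
    (r : ℕ → Ω' → ℝ) (hr : IsRademacherSeq P' r)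
    (μ : Measure S) [IsProbabilityMeasure μ]
    -- `X` has type 2 with constant `C`:
    (C : ℝ)
    (htype2 : ∀ (N : ℕ) (x : Fin N → X),
      Real.sqrt (∫ ω', ‖∑ n : Fin N, r n ω' • x n‖ ^ 2 ∂P') ≤
        C * Real.sqrt (∑ n : Fin N, ‖x n‖ ^ 2))
    (φ : Lp X 2 μ) :
    ∃ F : VectorMeasure S X,
      (∀ A : Set S, MeasurableSet A → F A = ∫ s in A, φ s ∂μ) ∧
      HasBoundedGammaVariation P γ μ ⇑F ∧
      gammaVar P γ μ ⇑F ≤ C * ‖φ‖ := by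
  have hX : HasType2 X P' r C := htype2
  have hF : ∀ A, MeasurableSet A → μ.withDensityᵥ φ A = ∫ s in A, φ s ∂μ :=
    fun A hA => withDensityᵥ_apply ((Lp.memLp φ).integrable one_le_two) hA
  have hCφ : C * ‖φ‖ = |C| * ‖φ‖ := by
    rcases subsingleton_or_nontrivial X with _ | _
    · rw [show φ = 0 from Lp.ext (ae_of_all _ fun _ => Subsingleton.elim _ _), norm_zero,
        mul_zero, mul_zero]
    · rw [abs_of_nonneg hX.nonneg]
  have hbound : ∀ v ∈ gammaVarSet P γ μ (μ.withDensityᵥ φ), v ≤ C * ‖φ‖ := by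
    rintro _ ⟨N, A, hA, hdisj, -, rfl⟩
    rw [hCφ, ← Real.sqrt_sq (by positivity : 0 ≤ |C| * ‖φ‖)]
    refine Real.sqrt_le_sqrt ?_
    calc ∫ ω, ‖∑ n : Fin N, (γ n ω / √(μ (A n)).toReal) • μ.withDensityᵥ φ (A n)‖ ^ 2 ∂P
        = ∫ ω, ‖∑ n : Fin N, γ n ω • (√(μ (A n)).toReal)⁻¹ • ∫ s in A n, φ s ∂μ‖ ^ 2 ∂P := by
          simp only [hF _ (hA _), div_eq_mul_inv, mul_smul]
      _ ≤ C ^ 2 * ∑ n : Fin N, ‖(√(μ (A n)).toReal)⁻¹ • ∫ s in A n, φ s ∂μ‖ ^ 2 :=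
          hγ.integral_norm_sum_smul_sq_le hr hX N _
      _ ≤ C ^ 2 * ‖φ‖ ^ 2 := by gcongr; exact sum_norm_inv_sqrt_smul_setIntegral_sq_le φ hA hdisj
      _ = (|C| * ‖φ‖) ^ 2 := by rw [mul_pow, sq_abs]
  exact ⟨_, hF, ⟨_, hbound⟩, csSup_le ⟨0, zero_mem_gammaVarSet _⟩ hbound⟩
end
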